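/- arXiv:1809.07390 — 2 statements merged into one kernel-verified Lean document; each statement's English description precedes it below -/
import Mathlib

section
/- Let k and s be nonnegative integers with k − s even and positive, let ψ : 𝔽₂^{k−s} → 𝔽₂^k be an injective 𝔽₂-linear map, let v ∈ 𝔽₂^k, and let g : 𝔽₂^{k−s} → 𝔽₂. Then there exists a Boolean function f on 𝔽₂^k whose Walsh–Hadamard transform satisfies W_f(v ⊕ ψ(x)) = 2^{(k+s)/2}·(−1)^{g(x)} for every x ∈ 𝔽₂^{k−s}, and W_f(u) = 0 for every u ∉ v ⊕ ψ(𝔽₂^{k−s}), if and only if g is a bent function on 𝔽₂^{k−s}. Such a function f is s-plateaued with Walsh support v ⊕ ψ(𝔽₂^{k−s}). -/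
open Finset

def dotp {ι : Type*} [Fintype ι] (a b : ι → ZMod 2) : ZMod 2 := ∑ i, a i * b i

def WHT {ι : Type*} [Fintype ι] [DecidableEq ι]
    (f : (ι → ZMod 2) → ZMod 2) (ω : ι → ZMod 2) : ℤ :=
  ∑ x : ι → ZMod 2, (-1 : ℤ) ^ ((f x + dotp ω x).val)

def IsBent {ι : Type*} [Fintype ι] [DecidableEq ι] (f : (ι → ZMod 2) → ZMod 2) : Prop :=
  ∀ ω, |WHT f ω| = 2 ^ (Fintype.card ι / 2)

def IsDualBent {ι : Type*} [Fintype ι] [DecidableEq ι] (f g : (ι → ZMod 2) → ZMod 2) : Prop :=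
  ∀ ω, WHT f ω = 2 ^ (Fintype.card ι / 2) * (-1 : ℤ) ^ ((g ω).val)

def IsPlateaued {ι : Type*} [Fintype ι] [DecidableEq ι] (s : ℕ) (f : (ι → ZMod 2) → ZMod 2) : Prop :=
  ∀ ω, WHT f ω = 0 ∨ WHT f ω = 2 ^ ((Fintype.card ι + s) / 2) ∨
    WHT f ω = -(2 ^ ((Fintype.card ι + s) / 2))

def WSupport {ι : Type*} [Fintype ι] [DecidableEq ι] (f : (ι → ZMod 2) → ZMod 2) : Set (ι → ZMod 2) :=
  {ω | WHT f ω ≠ 0}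

-- aux lemmas
lemma neg_one_pow_add : ∀ a b : ZMod 2,
    (-1 : ℤ) ^ ((a + b).val) = (-1 : ℤ) ^ a.val * (-1 : ℤ) ^ b.val := by decide

lemma dotp_comm {ι : Type*} [Fintype ι] (a b : ι → ZMod 2) : dotp a b = dotp b a := by
  simp [dotp, mul_comm]

lemma dotp_add_left {ι : Type*} [Fintype ι] (a b c : ι → ZMod 2) :
    dotp (a + b) c = dotp a c + dotp b c := by
  simp [dotp, add_mul, Finset.sum_add_distrib]

lemma dotp_add_right {ι : Type*} [Fintype ι] (a b c : ι → ZMod 2) :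
    dotp a (b + c) = dotp a b + dotp a c := by
  rw [dotp_comm, dotp_add_left, dotp_comm b a, dotp_comm c a]

lemma vadd_self {n : ℕ} (w : Fin n → ZMod 2) : w + w = 0 := by
  funext i
  have h : ∀ t : ZMod 2, t + t = 0 := by decide
  exact h _

lemma vadd_eq_zero_iff {n : ℕ} (x y : Fin n → ZMod 2) : x + y = 0 ↔ x = y := by
  constructor
  · intro h
    have h2 : x + y = y + y := by rw [h, vadd_self]
    exact add_right_cancel h2
  · rintro rfl; exact vadd_self x

lemma orth {n : ℕ} (a : Fin n → ZMod 2) :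
    ∑ y : Fin n → ZMod 2, (-1 : ℤ) ^ ((dotp a y).val) = if a = 0 then 2 ^ n else 0 := by
  split_ifs with h
  · subst h
    have h0 : ∀ y : Fin n → ZMod 2, dotp (0 : Fin n → ZMod 2) y = 0 := by
      intro y; simp [dotp]
    simp only [h0]
    simp [Finset.card_univ]
  · obtain ⟨i, hi⟩ : ∃ i, a i ≠ 0 := by
      by_contra hc
      push_neg at hc
      exact h (funext hc)
    have hai : a i = 1 := by
      have h2 : ∀ x : ZMod 2, x ≠ 0 → x = 1 := by decide
      exact h2 _ hi
    have key : ∀ y : Fin n → ZMod 2,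
        dotp a (Function.update y i (y i + 1)) = dotp a y + 1 := by
      intro y
      simp only [dotp]
      rw [Finset.sum_eq_sum_sdiff_singleton_add (Finset.mem_univ i)
        (fun j => a j * Function.update y i (y i + 1) j),
        Finset.sum_eq_sum_sdiff_singleton_add (Finset.mem_univ i) (fun j => a j * y j)]
      have hupd : ∀ j ∈ Finset.univ \ {i}, a j * Function.update y i (y i + 1) j = a j * y j := by
        intro j hj
        have hji : j ≠ i := by simpa using (Finset.mem_sdiff.mp hj).2
        rw [Function.update_of_ne hji]
      rw [Finset.sum_congr rfl hupd, Function.update_self, hai]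
      ring
    refine Finset.sum_ninvolution (fun y => Function.update y i (y i + 1)) ?_ ?_
      (fun _ => Finset.mem_univ _) ?_
    · intro y
      rw [key y]
      have h3 : ∀ d : ZMod 2, (-1 : ℤ) ^ d.val + (-1 : ℤ) ^ (d + 1).val = 0 := by decide
      exact h3 _
    · intro y _
      intro hc
      have hci := congrFun hc i
      simp only [Function.update_self] at hci
      have h4 : ∀ t : ZMod 2, t + 1 ≠ t := by decide
      exact h4 _ hci
    · intro y
      funext j
      by_cases hj : j = i
      · subst hj
        simp only [Function.update_self]
        have h5 : ∀ t : ZMod 2, t + 1 + 1 = t := by decide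
        exact h5 _
      · simp only [Function.update_of_ne hj]

lemma adjoint_dotp {k m : ℕ} (M : Matrix (Fin k) (Fin m) (ZMod 2))
    (x : Fin m → ZMod 2) (y : Fin k → ZMod 2) :
    dotp (M.mulVec x) y = dotp x (M.transpose.mulVec y) := by
  simp only [dotp, Matrix.mulVec, dotProduct, Matrix.transpose_apply,
    Finset.sum_mul, Finset.mul_sum]
  rw [Finset.sum_comm]
  apply Finset.sum_congr rfl; intro i _
  apply Finset.sum_congr rfl; intro j _
  ring

lemma transpose_surjective {k m : ℕ} (M : Matrix (Fin k) (Fin m) (ZMod 2))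
    (hM : Function.Injective M.mulVecLin) :
    Function.Surjective M.transpose.mulVecLin := by
  rw [← LinearMap.range_eq_top]
  have h1 : M.transpose.rank = M.rank := Matrix.rank_transpose M
  have h2 : M.rank = m := by
    rw [Matrix.rank, LinearMap.finrank_range_of_inj hM]
    simp [Module.finrank_pi]
  apply Submodule.eq_top_of_finrank_eq
  rw [← Matrix.rank, h1, h2]
  simp [Module.finrank_pi]

lemma inversion {n : ℕ} (f : (Fin n → ZMod 2) → ZMod 2) (y : Fin n → ZMod 2) :
    ∑ ω : Fin n → ZMod 2, WHT f ω * (-1 : ℤ) ^ ((dotp ω y).val)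
      = 2 ^ n * (-1 : ℤ) ^ ((f y).val) := by
  simp only [WHT, Finset.sum_mul]
  rw [Finset.sum_comm]
  have step : ∀ x : Fin n → ZMod 2,
      ∑ ω : Fin n → ZMod 2, (-1:ℤ)^((f x + dotp ω x).val) * (-1:ℤ)^((dotp ω y).val)
        = (-1:ℤ)^((f x).val) * (if x + y = 0 then (2:ℤ)^n else 0) := by
    intro x
    have e1 : ∀ ω : Fin n → ZMod 2,
        (-1:ℤ)^((f x + dotp ω x).val) * (-1:ℤ)^((dotp ω y).val)
          = (-1:ℤ)^((f x).val) * (-1:ℤ)^((dotp (x+y) ω).val) := by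
      intro ω
      rw [neg_one_pow_add (f x) (dotp ω x), dotp_comm (x+y) ω, dotp_add_right,
        neg_one_pow_add (dotp ω x) (dotp ω y)]
      ring
    rw [Finset.sum_congr rfl (fun ω _ => e1 ω), ← Finset.mul_sum, orth (x+y)]
  rw [Finset.sum_congr rfl (fun x _ => step x), Finset.sum_eq_single y]
  · rw [if_pos (vadd_self y)]; ring
  · intro x _ hxy
    rw [if_neg (fun hc => hxy ((vadd_eq_zero_iff x y).mp hc)), mul_zero]
  · intro hy; exact absurd (Finset.mem_univ y) hy

lemma exists_dual {n : ℕ} (g : (Fin n → ZMod 2) → ZMod 2) (hg : IsBent g) :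
    ∃ g' : (Fin n → ZMod 2) → ZMod 2,
      ∀ ω, WHT g ω = 2 ^ (n / 2) * (-1:ℤ) ^ ((g' ω).val) := by
  refine ⟨fun ω => if 0 < WHT g ω then 0 else 1, fun ω => ?_⟩
  have h := hg ω
  rw [Fintype.card_fin] at h
  by_cases hpos : 0 < WHT g ω
  · simp only [if_pos hpos]
    rw [abs_of_pos hpos] at h
    simp [h]
  · simp only [if_neg hpos]
    push_neg at hpos
    have hne : WHT g ω ≠ 0 := by
      intro hc; rw [hc] at h; simp at h
      exact absurd h.symm (by positivity)
    have hneg : WHT g ω < 0 := lt_of_le_of_ne hpos hne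
    rw [abs_of_neg hneg] at h
    have : WHT g ω = -(2 ^ (n/2)) := by linarith
    rw [this]
    norm_num [ZMod.val_one]

/-- for an injective linear `ψ : 𝔽₂^(k-s) → 𝔽₂^k`, `v ∈ 𝔽₂^k` and
`g : 𝔽₂^(k-s) → 𝔽₂`, a Boolean function `f` on `𝔽₂^k` with Walsh spectrum
`W_f(v + ψ x) = 2^((k+s)/2)·(-1)^(g x)` and zero outside `v + ψ(𝔽₂^(k-s))` exists
iff `g` is bent; and any such `f` is `s`-plateaued with Walsh support
`v + ψ(𝔽₂^(k-s))`. -/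
theorem stmt2 {k s : ℕ} (hks : s < k) (heven : Even (k - s))
    (ψ : (Fin (k - s) → ZMod 2) →ₗ[ZMod 2] (Fin k → ZMod 2))
    (hψ : Function.Injective ψ) (v : Fin k → ZMod 2)
    (g : (Fin (k - s) → ZMod 2) → ZMod 2) :
    ((∃ f : (Fin k → ZMod 2) → ZMod 2,
        (∀ x, WHT f (v + ψ x) = 2 ^ ((k + s) / 2) * (-1 : ℤ) ^ ((g x).val)) ∧
        (∀ u, u ∉ {w : Fin k → ZMod 2 | ∃ x, w = v + ψ x} → WHT f u = 0)) ↔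
      IsBent g) ∧
    (∀ f : (Fin k → ZMod 2) → ZMod 2,
      (∀ x, WHT f (v + ψ x) = 2 ^ ((k + s) / 2) * (-1 : ℤ) ^ ((g x).val)) →
      (∀ u, u ∉ {w : Fin k → ZMod 2 | ∃ x, w = v + ψ x} → WHT f u = 0) →
      IsPlateaued s f ∧ WSupport f = {w : Fin k → ZMod 2 | ∃ x, w = v + ψ x}) := by
  obtain ⟨t, ht⟩ := heven
  set M : Matrix (Fin k) (Fin (k - s)) (ZMod 2) := LinearMap.toMatrix' ψ with hMdef
  have hψM : ∀ x, ψ x = M.mulVec x := by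
    intro x
    rw [hMdef]
    conv_lhs => rw [← Matrix.toLin'_toMatrix' ψ]
    rw [Matrix.toLin'_apply]
  have hMinj : Function.Injective M.mulVecLin := by
    intro a b hab
    apply hψ
    rw [hψM, hψM]
    simpa [Matrix.mulVecLin_apply] using hab
  -- key identity used for the forward direction
  have keyid : ∀ f : (Fin k → ZMod 2) → ZMod 2,
      (∀ x, WHT f (v + ψ x) = 2 ^ ((k + s) / 2) * (-1 : ℤ) ^ ((g x).val)) →
      (∀ u, u ∉ {w : Fin k → ZMod 2 | ∃ x, w = v + ψ x} → WHT f u = 0) →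
      ∀ y : Fin k → ZMod 2,
        (2:ℤ) ^ ((k+s)/2) * ((-1:ℤ) ^ ((dotp v y).val) * WHT g (M.transpose.mulVec y))
          = 2 ^ k * (-1:ℤ) ^ ((f y).val) := by
    intro f h1 h2 y
    rw [← inversion f y]
    rw [← Finset.sum_subset
      (Finset.subset_univ (Finset.image (fun x : Fin (k - s) → ZMod 2 => v + ψ x) Finset.univ))
      (fun ω _ hω => by
        have hnm : ω ∉ {w : Fin k → ZMod 2 | ∃ x, w = v + ψ x} := by
          rintro ⟨x, hx⟩
          exact hω (Finset.mem_image.mpr ⟨x, Finset.mem_univ x, hx.symm⟩)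
        rw [h2 ω hnm, zero_mul])]
    rw [Finset.sum_image (fun a _ b _ hab => hψ (add_left_cancel hab))]
    have e3 : ∀ x : Fin (k - s) → ZMod 2,
        WHT f (v + ψ x) * (-1:ℤ) ^ ((dotp (v + ψ x) y).val)
          = 2 ^ ((k+s)/2) * ((-1:ℤ) ^ ((dotp v y).val) *
              ((-1:ℤ) ^ ((g x + dotp (M.transpose.mulVec y) x).val))) := by
      intro x
      rw [h1 x, dotp_add_left, neg_one_pow_add, neg_one_pow_add]
      have hd : dotp (ψ x) y = dotp (M.transpose.mulVec y) x := by
        rw [hψM, adjoint_dotp, dotp_comm]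
      rw [hd]
      ring
    rw [Finset.sum_congr rfl (fun x _ => e3 x), ← Finset.mul_sum, ← Finset.mul_sum]
    rfl
  constructor
  · constructor
    · -- forward : existence → bent
      rintro ⟨f, h1, h2⟩ ω
      obtain ⟨y, hy⟩ := transpose_surjective M hMinj ω
      have hy' : M.transpose.mulVec y = ω := by
        rw [← Matrix.mulVecLin_apply]; exact hy
      have hk2 := keyid f h1 h2 y
      rw [hy'] at hk2
      have habs := congrArg abs hk2
      simp only [abs_mul, abs_pow, abs_neg, abs_one, one_pow, one_mul, mul_one, abs_two] at habs
      rw [Fintype.card_fin]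
      have h2k : (2:ℤ)^k = 2^((k+s)/2) * 2^((k-s)/2) := by
        rw [← pow_add]; congr 1; omega
      rw [h2k] at habs
      exact mul_left_cancel₀ (pow_ne_zero _ two_ne_zero) habs
    · -- backward : bent → existence
      intro hbent
      obtain ⟨g', hg'⟩ := exists_dual g hbent
      set f : (Fin k → ZMod 2) → ZMod 2 :=
        fun y => dotp v y + g' (M.transpose.mulVec y) with hfdef
      have hfy : ∀ y, f y = dotp v y + g' (M.transpose.mulVec y) := fun y => rfl
      have main : ∀ u : Fin k → ZMod 2, (2:ℤ)^((k-s)/2) * WHT f u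
          = ∑ x : Fin (k - s) → ZMod 2, (-1:ℤ)^((g x).val) *
              (if M.mulVec x + (u + v) = 0 then (2:ℤ)^k else 0) := by
        intro u
        simp only [WHT, Finset.mul_sum]
        have e1 : ∀ y : Fin k → ZMod 2, (2:ℤ)^((k-s)/2) * (-1:ℤ)^((f y + dotp u y).val)
            = WHT g (M.transpose.mulVec y) * (-1:ℤ)^((dotp (u+v) y).val) := by
          intro y
          have hexp : f y + dotp u y = g' (M.transpose.mulVec y) + dotp (u + v) y := by
            rw [hfy, dotp_add_left]
            ring
          rw [hexp, neg_one_pow_add, hg' (M.transpose.mulVec y)]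
          ring
        rw [Finset.sum_congr rfl (fun y _ => e1 y)]
        simp only [WHT, Finset.sum_mul]
        rw [Finset.sum_comm]
        apply Finset.sum_congr rfl
        intro x _
        have e2 : ∀ y : Fin k → ZMod 2,
            (-1:ℤ)^((g x + dotp (M.transpose.mulVec y) x).val) * (-1:ℤ)^((dotp (u+v) y).val)
              = (-1:ℤ)^((g x).val) * (-1:ℤ)^((dotp (M.mulVec x + (u+v)) y).val) := by
          intro y
          have hd : dotp (M.transpose.mulVec y) x = dotp (M.mulVec x) y := by
            rw [dotp_comm, ← adjoint_dotp]
          rw [neg_one_pow_add (g x), hd, dotp_add_left (M.mulVec x) (u + v) y,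
            neg_one_pow_add (dotp (M.mulVec x) y) (dotp (u + v) y)]
          ring
        rw [Finset.sum_congr rfl (fun y _ => e2 y), ← Finset.mul_sum, orth]
      refine ⟨f, ?_, ?_⟩
      · intro x0
        have hm0 := main (v + ψ x0)
        have hc : v + ψ x0 + v = M.mulVec x0 := by
          have h5 : v + ψ x0 + v = ψ x0 + (v + v) := by ring
          rw [h5, vadd_self, add_zero, hψM]
        rw [hc] at hm0
        have hsingle : (∑ x : Fin (k - s) → ZMod 2, (-1:ℤ)^((g x).val) *
            (if M.mulVec x + M.mulVec x0 = 0 then (2:ℤ)^k else 0))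
            = (-1:ℤ)^((g x0).val) * 2^k := by
          rw [Finset.sum_eq_single x0]
          · rw [if_pos (vadd_self _)]
          · intro x _ hx
            rw [if_neg, mul_zero]
            intro hc2
            exact hx (hMinj (by
              simpa [Matrix.mulVecLin_apply] using (vadd_eq_zero_iff _ _).mp hc2))
          · intro h; exact absurd (Finset.mem_univ _) h
        rw [hsingle] at hm0
        have h2k : ((-1:ℤ))^((g x0).val) * 2^k
            = 2^((k-s)/2) * (2^((k+s)/2) * (-1:ℤ)^((g x0).val)) := by
          have h6 : (2:ℤ)^k = 2^((k-s)/2) * 2^((k+s)/2) := by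
            rw [← pow_add]; congr 1; omega
          rw [h6]; ring
        rw [h2k] at hm0
        exact mul_left_cancel₀ (pow_ne_zero _ two_ne_zero) hm0
      · intro u hu
        have hm0 := main u
        have hz : ∀ x : Fin (k - s) → ZMod 2, ¬ (M.mulVec x + (u + v) = 0) := by
          intro x hc2
          apply hu
          have h7 : M.mulVec x = u + v := (vadd_eq_zero_iff _ _).mp hc2
          have h3 : u = v + M.mulVec x := by
            rw [h7]
            have h5 : v + (u + v) = u + (v + v) := by ring
            rw [h5, vadd_self, add_zero]
          exact ⟨x, by rw [hψM]; exact h3⟩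
        have hzero : (∑ x : Fin (k - s) → ZMod 2, (-1:ℤ)^((g x).val) *
            (if M.mulVec x + (u + v) = 0 then (2:ℤ)^k else 0)) = 0 :=
          Finset.sum_eq_zero (fun x _ => by rw [if_neg (hz x), mul_zero])
        rw [hzero] at hm0
        exact (mul_eq_zero.mp hm0).resolve_left (pow_ne_zero _ two_ne_zero)
  · -- part 2
    intro f h1 h2
    constructor
    · intro ω
      by_cases hω : ω ∈ {w : Fin k → ZMod 2 | ∃ x, w = v + ψ x}
      · obtain ⟨x, hx⟩ := hω
        right
        rw [hx, h1 x]
        simp only [Fintype.card_fin]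
        have hval : (g x).val = 0 ∨ (g x).val = 1 := by
          have := ZMod.val_lt (g x); omega
        rcases hval with h | h <;> rw [h]
        · left; ring
        · right; ring
      · left; exact h2 ω hω
    · ext ω
      simp only [WSupport, Set.mem_setOf_eq]
      constructor
      · intro hne
        by_contra hc
        exact hne (h2 ω hc)
      · rintro ⟨x, rfl⟩
        rw [h1 x]
        intro hc
        rcases mul_eq_zero.mp hc with h | h
        · exact absurd h (pow_ne_zero _ two_ne_zero)
        · exact absurd h (pow_ne_zero _ (by norm_num))
end

section
/- Let s ≥ 1, let m ≥ 2 be even, let k = s + m, and let r be a positive integer. Let f be an s-plateaued Boolean function on 𝔽₂^k whose Walsh support is S_f = {(ϑ(v), v) : v ∈ 𝔽₂^m} for some map ϑ : 𝔽₂^m → 𝔽₂^s with ϑ(v) ≠ 0 for all v. Let h₁,…,h_s be Boolean functions on 𝔽₂^r such that for every δ in the image of ϑ the function δ·(h₁,…,h_s) is c-plateaued on 𝔽₂^r, where 1 ≤ c ≤ r−1 and c has the same parity as r. Then 𝔣(x,y) = f(h₁(x),…,h_s(x), y) is a c-plateaued function on 𝔽₂^{r+m}. -/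
open Finset

def chi (a : ZMod 2) : ℤ := (-1) ^ a.val

lemma chi_add (a b : ZMod 2) : chi (a + b) = chi a * chi b := by revert a b; decide

lemma chi_one : chi 1 = -1 := rfl

lemma WHT_eq {ι : Type*} [Fintype ι] [DecidableEq ι]
    (f : (ι → ZMod 2) → ZMod 2) (ω : ι → ZMod 2) :
    WHT f ω = ∑ x : ι → ZMod 2, chi (f x + dotp ω x) := rfl

lemma zmod2_add_eq_zero_iff (a b : ZMod 2) : a + b = 0 ↔ a = b := by revert a b; decide

lemma fun_add_eq_zero_iff {ι : Type*} (a b : ι → ZMod 2) : a + b = 0 ↔ a = b := by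
  simp only [funext_iff, Pi.add_apply, Pi.zero_apply, zmod2_add_eq_zero_iff]

lemma dotp_sum {ι κ : Type*} [Fintype ι] [Fintype κ] (a b : (ι ⊕ κ) → ZMod 2) :
    dotp a b = dotp (a ∘ Sum.inl) (b ∘ Sum.inl) + dotp (a ∘ Sum.inr) (b ∘ Sum.inr) := by
  simpa [dotp] using Fintype.sum_sum_type (fun i : ι ⊕ κ => a i * b i)

lemma dotp_append {p q : ℕ} (a c : Fin p → ZMod 2) (b d : Fin q → ZMod 2) :
    dotp (Fin.append a b) (Fin.append c d) = dotp a c + dotp b d := by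
  simp [dotp, Fin.sum_univ_add, Fin.append_left, Fin.append_right]

lemma sum_chi_dotp {ι : Type*} [Fintype ι] [DecidableEq ι] (w : ι → ZMod 2) :
    ∑ y : ι → ZMod 2, chi (dotp w y) = if w = 0 then 2 ^ Fintype.card ι else 0 := by
  split_ifs with hw
  · subst hw
    have h0 : ∀ y : ι → ZMod 2, dotp (0 : ι → ZMod 2) y = 0 := by
      intro y; simp [dotp]
    simp [h0, chi, Finset.card_univ]
  · obtain ⟨i₀, hi₀⟩ : ∃ i, w i ≠ 0 := by
      by_contra hc; push_neg at hc; exact hw (funext hc)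
    have hw1 : w i₀ = 1 := by
      revert hi₀; generalize w i₀ = t; revert t; decide
    set e : ι → ZMod 2 := fun j => if j = i₀ then 1 else 0 with he
    have hde : dotp w e = 1 := by
      simp [dotp, e, mul_ite, Finset.sum_ite_eq', hw1]
    have key : ∀ y, chi (dotp w (y + e)) = - chi (dotp w y) := by
      intro y
      rw [dotp_add_right, chi_add, hde, chi_one]; ring
    have hS : ∑ y : ι → ZMod 2, chi (dotp w (y + e)) = ∑ y : ι → ZMod 2, chi (dotp w y) :=
      Equiv.sum_comp (Equiv.addRight e) (fun y => chi (dotp w y))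
    have hneg : ∑ y : ι → ZMod 2, chi (dotp w (y + e)) = - ∑ y : ι → ZMod 2, chi (dotp w y) := by
      simp [key]
    linarith [hS, hneg]

lemma inversion_s5 {ι : Type*} [Fintype ι] [DecidableEq ι] (f : (ι → ZMod 2) → ZMod 2)
    (u : ι → ZMod 2) :
    ∑ ω : ι → ZMod 2, WHT f ω * chi (dotp ω u) = 2 ^ Fintype.card ι * chi (f u) := by
  have h1 : ∀ ω : ι → ZMod 2, WHT f ω * chi (dotp ω u)
      = ∑ x : ι → ZMod 2, chi (f x) * chi (dotp ω (x + u)) := by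
    intro ω
    rw [WHT_eq, Finset.sum_mul]
    refine Finset.sum_congr rfl fun x _ => ?_
    rw [chi_add, dotp_add_right, chi_add]; ring
  simp_rw [h1]
  rw [Finset.sum_comm]
  have h2 : ∀ x : ι → ZMod 2, ∑ ω : ι → ZMod 2, chi (f x) * chi (dotp ω (x + u))
      = chi (f x) * (if x = u then 2 ^ Fintype.card ι else 0) := by
    intro x
    rw [← Finset.mul_sum]
    congr 1
    calc ∑ ω : ι → ZMod 2, chi (dotp ω (x + u))
        = ∑ ω : ι → ZMod 2, chi (dotp (x + u) ω) := by simp_rw [dotp_comm]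
      _ = if x + u = 0 then 2 ^ Fintype.card ι else 0 := sum_chi_dotp _
      _ = _ := by simp only [fun_add_eq_zero_iff]
  simp_rw [h2, mul_ite, mul_zero]
  rw [Finset.sum_ite_eq' Finset.univ u (fun x => chi (f x) * 2 ^ Fintype.card ι)]
  simp [mul_comm]

lemma sum_arrow_split {ι κ : Type*} [Fintype ι] [Fintype κ] [DecidableEq ι] [DecidableEq κ]
    (Φ : ((ι ⊕ κ) → ZMod 2) → ℤ) :
    ∑ z : (ι ⊕ κ) → ZMod 2, Φ z
      = ∑ x : ι → ZMod 2, ∑ y : κ → ZMod 2, Φ (Sum.elim x y) := by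
  calc ∑ z : (ι ⊕ κ) → ZMod 2, Φ z
      = ∑ p : (ι → ZMod 2) × (κ → ZMod 2),
          Φ ((Equiv.sumArrowEquivProdArrow ι κ (ZMod 2)).symm p) :=
        (Equiv.sum_comp (Equiv.sumArrowEquivProdArrow ι κ (ZMod 2)).symm Φ).symm
    _ = _ := by
        rw [Fintype.sum_prod_type]
        simp [Equiv.sumArrowEquivProdArrow]


/-- if `f` is `s`-plateaued on `𝔽₂^(s+m)` with Walsh support
`{(ϑ(v),v) : v ∈ 𝔽₂^m}` (`ϑ(v) ≠ 0`), and `δ·(h₁,…,h_s)` is `c`-plateaued on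
`𝔽₂^r` (`1 ≤ c ≤ r-1`, `c ≡ r (mod 2)`) for every `δ` in the image of `ϑ`, then
`𝔣(x,y) = f(h₁(x),…,h_s(x),y)` is `c`-plateaued on `𝔽₂^(r+m)`. -/
theorem stmt5 {s m r c : ℕ} (hs : 1 ≤ s) (hm : 2 ≤ m) (hme : Even m) (hr : 0 < r)
    (hc1 : 1 ≤ c) (hc2 : c ≤ r - 1) (hcr : c % 2 = r % 2)
    (f : (Fin (s + m) → ZMod 2) → ZMod 2)
    (hf : IsPlateaued s f)
    (ϑ : (Fin m → ZMod 2) → (Fin s → ZMod 2))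
    (hϑ : ∀ v, ϑ v ≠ 0)
    (hsupp : WSupport f = {w : Fin (s + m) → ZMod 2 | ∃ v, w = Fin.append (ϑ v) v})
    (h : Fin s → (Fin r → ZMod 2) → ZMod 2)
    (hplat : ∀ v : Fin m → ZMod 2,
      IsPlateaued c (fun x => dotp (ϑ v) (fun i => h i x)))
    (F : ((Fin r ⊕ Fin m) → ZMod 2) → ZMod 2)
    (hF : ∀ x, F x = f (Fin.append (fun i => h i (x ∘ Sum.inl)) (x ∘ Sum.inr))) :
    IsPlateaued c F := by
  have hm2 : m % 2 = 0 := Nat.even_iff.mp hme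
  have hinj : Function.Injective (fun v : Fin m → ZMod 2 => Fin.append (ϑ v) v) := by
    intro a b hab
    funext j
    have := congrFun hab (Fin.natAdd s j)
    simpa [Fin.append_right] using this
  have hvanish : ∀ w : Fin (s + m) → ZMod 2,
      (¬ ∃ v, w = Fin.append (ϑ v) v) → WHT f w = 0 := by
    intro w hw
    by_contra h0
    have hmem : w ∈ WSupport f := h0
    rw [hsupp] at hmem
    exact hw hmem
  have hrestrict : ∀ A : (Fin (s + m) → ZMod 2) → ℤ,
      ∑ w : Fin (s + m) → ZMod 2, WHT f w * A w
        = ∑ v : Fin m → ZMod 2, WHT f (Fin.append (ϑ v) v) * A (Fin.append (ϑ v) v) := by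
    intro A
    rw [show (∑ v : Fin m → ZMod 2, WHT f (Fin.append (ϑ v) v) * A (Fin.append (ϑ v) v))
        = ∑ w ∈ Finset.image (fun v : Fin m → ZMod 2 => Fin.append (ϑ v) v) Finset.univ,
            WHT f w * A w from
      (Finset.sum_image (s := (Finset.univ : Finset (Fin m → ZMod 2)))
        (f := fun w => WHT f w * A w) (g := fun v : Fin m → ZMod 2 => Fin.append (ϑ v) v)
        (fun a _ b _ hab => hinj hab)).symm]
    refine (Finset.sum_subset (Finset.subset_univ _) ?_).symm
    intro w _ hw
    rw [hvanish w ?_, zero_mul]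
    rintro ⟨v, hv⟩
    exact hw (Finset.mem_image.mpr ⟨v, Finset.mem_univ v, hv.symm⟩)
  intro ω
  have hcardsum : Fintype.card (Fin r ⊕ Fin m) = r + m := by simp
  rw [hcardsum]
  have stepA : (2:ℤ) ^ (s + m) * WHT F ω
      = 2 ^ m * (WHT f (Fin.append (ϑ (ω ∘ Sum.inr)) (ω ∘ Sum.inr))
          * WHT (fun x => dotp (ϑ (ω ∘ Sum.inr)) (fun i => h i x)) (ω ∘ Sum.inl)) := by
    have e1 : (2:ℤ) ^ (s + m) * WHT F ω
        = ∑ z : (Fin r ⊕ Fin m) → ZMod 2, chi (dotp ω z) *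
            ∑ w : Fin (s + m) → ZMod 2,
              WHT f w * chi (dotp w (Fin.append (fun i => h i (z ∘ Sum.inl)) (z ∘ Sum.inr))) := by
      rw [WHT_eq, Finset.mul_sum]
      refine Finset.sum_congr rfl fun z _ => ?_
      have hinv := inversion_s5 f (Fin.append (fun i => h i (z ∘ Sum.inl)) (z ∘ Sum.inr))
      rw [Fintype.card_fin] at hinv
      rw [hF z, chi_add, hinv]
      ring
    have e2 : (2:ℤ) ^ (s + m) * WHT F ω
        = ∑ w : Fin (s + m) → ZMod 2, WHT f w *
            ∑ z : (Fin r ⊕ Fin m) → ZMod 2,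
              chi (dotp ω z) * chi (dotp w (Fin.append (fun i => h i (z ∘ Sum.inl)) (z ∘ Sum.inr))) := by
      rw [e1]
      simp_rw [Finset.mul_sum]
      rw [Finset.sum_comm]
      exact Finset.sum_congr rfl fun w _ => Finset.sum_congr rfl fun z _ => by ring
    rw [e2, hrestrict]
    have hSv : ∀ v : Fin m → ZMod 2,
        ∑ z : (Fin r ⊕ Fin m) → ZMod 2,
            chi (dotp ω z) * chi (dotp (Fin.append (ϑ v) v)
              (Fin.append (fun i => h i (z ∘ Sum.inl)) (z ∘ Sum.inr)))
          = WHT (fun x => dotp (ϑ v) (fun i => h i x)) (ω ∘ Sum.inl)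
              * (if v = ω ∘ Sum.inr then 2 ^ m else 0) := by
      intro v
      have hterm : ∀ (x : Fin r → ZMod 2) (y : Fin m → ZMod 2),
          chi (dotp ω (Sum.elim x y)) * chi (dotp (Fin.append (ϑ v) v)
              (Fin.append (fun i => h i ((Sum.elim x y) ∘ Sum.inl)) ((Sum.elim x y) ∘ Sum.inr)))
            = chi (dotp (ϑ v) (fun i => h i x) + dotp (ω ∘ Sum.inl) x)
              * chi (dotp (v + (ω ∘ Sum.inr)) y) := by
        intro x y
        rw [dotp_sum ω (Sum.elim x y)]
        simp only [Sum.elim_comp_inl, Sum.elim_comp_inr]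
        rw [dotp_append, dotp_add_left, chi_add, chi_add, chi_add, chi_add]
        ring
      rw [sum_arrow_split (fun z : (Fin r ⊕ Fin m) → ZMod 2 => chi (dotp ω z) *
            chi (dotp (Fin.append (ϑ v) v)
              (Fin.append (fun i => h i (z ∘ Sum.inl)) (z ∘ Sum.inr))))]
      refine Eq.trans (Finset.sum_congr rfl fun x _ =>
        Finset.sum_congr rfl fun y _ => hterm x y) ?_
      rw [← Finset.sum_mul_sum]
      rw [WHT_eq]
      congr 1
      rw [sum_chi_dotp]
      simp only [fun_add_eq_zero_iff, Fintype.card_fin]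
    refine Eq.trans (Finset.sum_congr rfl fun v _ => by rw [hSv v]) ?_
    simp only [mul_ite, mul_zero]
    rw [Finset.sum_ite_eq' Finset.univ (ω ∘ Sum.inr)
      (fun v => WHT f (Fin.append (ϑ v) v)
        * (WHT (fun x => dotp (ϑ v) (fun i => h i x)) (ω ∘ Sum.inl) * 2 ^ m))]
    simp only [Finset.mem_univ, if_true]
    ring
  have hmemS : Fin.append (ϑ (ω ∘ Sum.inr)) (ω ∘ Sum.inr) ∈ WSupport f := by
    rw [hsupp]; exact ⟨ω ∘ Sum.inr, rfl⟩
  have hWfne : WHT f (Fin.append (ϑ (ω ∘ Sum.inr)) (ω ∘ Sum.inr)) ≠ 0 := hmemS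
  have hWf := hf (Fin.append (ϑ (ω ∘ Sum.inr)) (ω ∘ Sum.inr))
  rw [Fintype.card_fin] at hWf
  have hWg := hplat (ω ∘ Sum.inr) (ω ∘ Sum.inl)
  rw [Fintype.card_fin] at hWg
  have h2ne : ((2:ℤ) ^ (s + m)) ≠ 0 := by positivity
  obtain ⟨ε1, hε1, hWfv⟩ : ∃ ε : ℤ, (ε = 1 ∨ ε = -1) ∧
      WHT f (Fin.append (ϑ (ω ∘ Sum.inr)) (ω ∘ Sum.inr)) = ε * 2 ^ ((s + m + s) / 2) := by
    rcases hWf with h0 | hp | hn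
    · exact absurd h0 hWfne
    · exact ⟨1, Or.inl rfl, by rw [hp]; ring⟩
    · exact ⟨-1, Or.inr rfl, by rw [hn]; ring⟩
  have hexp : m + ((s + m + s) / 2 + (r + c) / 2) = (s + m) + (r + m + c) / 2 := by omega
  have hpow : (2:ℤ) ^ m * (2 ^ ((s + m + s) / 2) * 2 ^ ((r + c) / 2))
      = 2 ^ (s + m) * 2 ^ ((r + m + c) / 2) := by
    rw [← pow_add, ← pow_add, ← pow_add, hexp]
  rcases hWg with hg0 | hgp | hgn
  · left
    apply mul_left_cancel₀ h2ne
    rw [stepA, hg0]; ring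
  · have key : WHT F ω = ε1 * 2 ^ ((r + m + c) / 2) := by
      apply mul_left_cancel₀ h2ne
      rw [stepA, hWfv, hgp]
      linear_combination ε1 * hpow
    rcases hε1 with rfl | rfl
    · right; left; rw [key]; ring
    · right; right; rw [key]; ring
  · have key : WHT F ω = -ε1 * 2 ^ ((r + m + c) / 2) := by
      apply mul_left_cancel₀ h2ne
      rw [stepA, hWfv, hgn]
      linear_combination (-ε1) * hpow
    rcases hε1 with rfl | rfl
    · right; right; rw [key]; ring
    · right; left; rw [key]; ring
end
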